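/- arXiv:1910.02422 — 3 statements merged into one kernel-verified Lean document; each statement's English description precedes it below -/
import Mathlib

section
/- Let F : ℝ → ℝ be a C² convex even function with F(0) = 0 and f(s) = F'(s) ≥ 0 for all s ≥ 0. Then for all u, v ≥ 0, |F(u - v) - F(u) - F(v)| ≤ 2(f(u)·v + f(v)·u). -/
theorem stmt0 (F : ℝ → ℝ) (f : ℝ → ℝ)
    (hF : ContDiff ℝ 2 F) (hconv : ConvexOn ℝ Set.univ F)
    (heven : ∀ s : ℝ, F (-s) = F s) (hF0 : F 0 = 0)
    (hf : f = deriv F) (hfpos : ∀ s : ℝ, 0 ≤ s → 0 ≤ f s) :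
    ∀ u v : ℝ, 0 ≤ u → 0 ≤ v →
      |F (u - v) - F u - F v| ≤ 2 * (f u * v + f v * u) := by
  have hdiff : Differentiable ℝ F := hF.differentiable (by norm_num)
  have hfmono : Monotone f := by
    rw [hf]
    have := hconv.monotoneOn_deriv (fun x _ => hdiff.differentiableAt)
    intro a b hab
    exact this (Set.mem_univ a) (Set.mem_univ b) hab
  -- key: for 0 ≤ a ≤ b, 0 ≤ F b - F a ≤ f b * (b - a)
  have key : ∀ a b : ℝ, 0 ≤ a → a ≤ b →
      0 ≤ F b - F a ∧ F b - F a ≤ f b * (b - a) := by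
    intro a b ha hab
    rcases eq_or_lt_of_le hab with rfl | hlt
    · simp
    · obtain ⟨c, hc, hderiv⟩ := exists_deriv_eq_slope F hlt
        (hdiff.continuous.continuousOn) (fun x _ => hdiff.differentiableAt.differentiableWithinAt)
      have hfc : f c = (F b - F a) / (b - a) := by rw [hf, hderiv]
      have hba : (0:ℝ) < b - a := by linarith
      have h1 : F b - F a = f c * (b - a) := by
        rw [hfc]; field_simp
      constructor
      · rw [h1]
        have : 0 ≤ f c := hfpos c (le_of_lt (lt_of_le_of_lt ha hc.1))
        positivity
      · rw [h1]
        have : f c ≤ f b := hfmono (le_of_lt hc.2)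
        nlinarith
  have hFnonneg : ∀ a : ℝ, 0 ≤ a → 0 ≤ F a := by
    intro a ha
    have := (key 0 a le_rfl ha).1
    linarith
  -- main, wlog u ≥ v
  have main : ∀ u v : ℝ, 0 ≤ v → v ≤ u →
      |F (u - v) - F u - F v| ≤ 2 * (f u * v + f v * u) := by
    intro u v hv hvu
    have hu : 0 ≤ u := le_trans hv hvu
    have h1 : 0 ≤ F u - F (u - v) := (key (u - v) u (by linarith) (by linarith)).1
    have h2 : F u - F (u - v) ≤ f u * v := by
      have := (key (u - v) u (by linarith) (by linarith)).2
      simpa using this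
    have h3 : F v ≤ f v * v := by
      have := (key 0 v le_rfl hv).2
      simpa [hF0] using this
    have h4 : 0 ≤ F v := hFnonneg v hv
    have h5 : f v * v ≤ f v * u := by
      have := hfpos v hv; nlinarith
    have h6 : 0 ≤ f u * v := mul_nonneg (hfpos u hu) hv
    have h7 : 0 ≤ f v * u := mul_nonneg (hfpos v hv) hu
    rw [abs_le]
    constructor <;> nlinarith
  intro u v hu hv
  rcases le_total v u with h | h
  · exact main u v hv h
  · have := main v u hu h
    have he : F (u - v) = F (v - u) := by
      rw [← heven (v - u)]; ring_nf
    rw [he]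
    calc |F (v - u) - F u - F v| = |F (v - u) - F v - F u| := by ring_nf
      _ ≤ 2 * (f v * u + f u * v) := this
      _ = 2 * (f u * v + f v * u) := by ring
end

section
/- For all real numbers a, b, every β > 1 and L > 0, one has (a - b)·(a·|a|_L^{2(β-1)} - b·|b|_L^{2(β-1)}) ≥ ((2β - 1)/β²)·(a·|a|_L^{β-1} - b·|b|_L^{β-1})², where t_L = sgn(t)·min(|t|, L) denotes the truncation of t at level L. -/
/-!
Let `f = truncRPow L (2(β-1))`, `g = truncRPow L (β-1)` (so `truncRPow L e t = t |t|_L^e`) and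
`c = (2β-1)/β²`. Away from `0, ±L` both are differentiable with `c g'² ≤ f'`: with equality
for `|t| < L`, where `g' = β |t|^(β-1)` and `f' = (2β-1) |t|^(2(β-1))`, and because `c ≤ 1` for
`|t| > L`, where `g' = L^(β-1)` and `f' = L^(2(β-1))`. Hence for every `l` the function
`f - 2cl g + cl² id` has derivative `≥ c (g' - l)² ≥ 0` off a finite set, so it is monotone;
taking for `l` the difference quotient of `g` between `b` and `a` gives the inequality.
-/

open Set

theorem monotoneOn_Icc_of_hasDerivAt_nonneg_off_finset {F : ℝ → ℝ} (hF : Continuous F)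
    (s : Finset ℝ) {a b : ℝ} (hF' : ∀ x ∈ Ioo a b \ s, ∃ d, HasDerivAt F d x ∧ 0 ≤ d) :
    MonotoneOn F (Icc a b) := by
  classical
  induction s using Finset.induction_on generalizing a b with
  | empty =>
    choose! d hd hd0 using hF'
    refine monotoneOn_of_hasDerivWithinAt_nonneg (convex_Icc a b) hF.continuousOn
      (fun x hx => (hd x ?_).hasDerivWithinAt) (fun x hx => hd0 x ?_) <;> simpa using hx
  | insert p s _ ih =>
    by_cases hp : p ∈ Ioo a b
    · rw [← Icc_union_Icc_eq_Icc hp.1.le hp.2.le]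
      refine MonotoneOn.union_right (ih fun x hx => hF' x ⟨⟨hx.1.1, hx.1.2.trans hp.2⟩, ?_⟩)
        (ih fun x hx => hF' x ⟨⟨hp.1.trans hx.1.1, hx.1.2⟩, ?_⟩)
        (isGreatest_Icc hp.1.le) (isLeast_Icc hp.2.le)
      · simpa [hx.1.2.ne] using hx.2
      · simpa [hx.1.1.ne'] using hx.2
    · exact ih fun x hx => hF' x ⟨hx.1, by
        simpa [show x ≠ p by rintro rfl; exact hp hx.1] using hx.2⟩

theorem monotone_of_hasDerivAt_nonneg_off_finite {F : ℝ → ℝ} (hF : Continuous F) {s : Set ℝ}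
    (hs : s.Finite) (hF' : ∀ x ∉ s, ∃ d, HasDerivAt F d x ∧ 0 ≤ d) : Monotone F :=
  fun a b hab => monotoneOn_Icc_of_hasDerivAt_nonneg_off_finset hF hs.toFinset
    (fun x hx => hF' x (by simpa using hx.2)) (left_mem_Icc.2 hab) (right_mem_Icc.2 hab) hab

theorem mul_sq_sub_le_of_monotone {f g : ℝ → ℝ} {c : ℝ}
    (h : ∀ l : ℝ, Monotone fun t => f t - 2 * c * l * g t + c * l ^ 2 * t) (a b : ℝ) :
    c * (g a - g b) ^ 2 ≤ (a - b) * (f a - f b) := by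
  wlog hba : b ≤ a generalizing a b
  · convert this b a (le_of_not_ge hba) using 1 <;> ring
  obtain rfl | hlt := hba.eq_or_lt
  · simp
  obtain ⟨l, hl⟩ : ∃ l, g a - g b = l * (a - b) :=
    ⟨(g a - g b) / (a - b), by field_simp [sub_ne_zero.2 hlt.ne']⟩
  have hFab := mul_le_mul_of_nonneg_left (h l hba) (sub_nonneg.2 hba)
  simp only at hFab
  linear_combination hFab + c * (g a - g b - l * (a - b)) * hl

theorem mul_sq_sub_le_of_hasDerivAt {f g : ℝ → ℝ} {c : ℝ} {s : Set ℝ} (hc : 0 ≤ c)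
    (hs : s.Finite) (hf : Continuous f) (hg : Continuous g)
    (hfg : ∀ x ∉ s, ∃ f' g', HasDerivAt f f' x ∧ HasDerivAt g g' x ∧ c * g' ^ 2 ≤ f')
    (a b : ℝ) : c * (g a - g b) ^ 2 ≤ (a - b) * (f a - f b) := by
  refine mul_sq_sub_le_of_monotone (fun l => ?_) a b
  refine monotone_of_hasDerivAt_nonneg_off_finite (by fun_prop) hs fun x hx => ?_
  obtain ⟨f', g', hf', hg', hle⟩ := hfg x hx
  exact ⟨_, (hf'.sub (hg'.const_mul _)).add ((hasDerivAt_id x).const_mul _),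
    by nlinarith [mul_nonneg hc (sq_nonneg (g' - l))]⟩

noncomputable def truncRPow (L e t : ℝ) : ℝ := t * min |t| L ^ e

theorem continuous_truncRPow (L : ℝ) {e : ℝ} (he : 0 ≤ e) : Continuous (truncRPow L e) :=
  continuous_id.mul ((continuous_abs.min continuous_const).rpow_const fun _ => Or.inr he)

theorem hasDerivAt_truncRPow_of_abs_lt {L e t : ℝ} (ht : t ≠ 0) (htL : |t| < L) :
    HasDerivAt (truncRPow L e) ((e + 1) * |t| ^ e) t := by
  have hev : (fun s => s * |s| ^ e) =ᶠ[nhds t] truncRPow L e := by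
    filter_upwards [(isOpen_lt continuous_abs continuous_const).mem_nhds htL] with s hs
    rw [truncRPow, min_eq_left hs.le]
  refine HasDerivAt.congr_of_eventuallyEq ?_ hev.symm
  refine ((hasDerivAt_id t).mul ((hasDerivAt_abs ht).rpow_const (p := e)
    (Or.inl (abs_ne_zero.2 ht)))).congr_deriv ?_
  rw [Real.rpow_sub_one (abs_ne_zero.2 ht), id, ← mul_assoc, ← mul_assoc, self_mul_sign]
  field_simp [abs_ne_zero.2 ht]
  ring

theorem hasDerivAt_truncRPow_of_lt_abs {L e t : ℝ} (htL : L < |t|) :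
    HasDerivAt (truncRPow L e) (L ^ e) t := by
  have hev : (fun s => s * L ^ e) =ᶠ[nhds t] truncRPow L e := by
    filter_upwards [(isOpen_lt continuous_const continuous_abs).mem_nhds htL] with s hs
    rw [truncRPow, min_eq_right hs.le]
  exact (hasDerivAt_mul_const _).congr_of_eventuallyEq hev.symm

theorem exists_hasDerivAt_truncRPow_sq_le {β L t : ℝ} (hβ : 1 < β) (hL : 0 < L)
    (ht : t ∉ ({-L, 0, L} : Set ℝ)) :
    ∃ f' g', HasDerivAt (truncRPow L (2 * (β - 1))) f' t ∧
      HasDerivAt (truncRPow L (β - 1)) g' t ∧ (2 * β - 1) / β ^ 2 * g' ^ 2 ≤ f' := by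
  have rpow_two_mul : ∀ x : ℝ, 0 ≤ x → x ^ (2 * (β - 1)) = (x ^ (β - 1)) ^ 2 := fun x hx => by
    rw [mul_comm, Real.rpow_mul hx, Real.rpow_two]
  simp only [mem_insert_iff, mem_singleton_iff, not_or] at ht
  obtain ⟨htnegL, ht0, htL⟩ := ht
  have habs : |t| ≠ L := by
    intro h; rcases (abs_eq hL.le).1 h with h | h <;> contradiction
  rcases habs.lt_or_gt with h | h
  · refine ⟨_, _, hasDerivAt_truncRPow_of_abs_lt ht0 h, hasDerivAt_truncRPow_of_abs_lt ht0 h,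
      le_of_eq ?_⟩
    rw [rpow_two_mul _ (abs_nonneg t)]
    field_simp
    ring
  · refine ⟨_, _, hasDerivAt_truncRPow_of_lt_abs h, hasDerivAt_truncRPow_of_lt_abs h, ?_⟩
    rw [rpow_two_mul _ hL.le]
    refine mul_le_of_le_one_left (sq_nonneg _) ?_
    rw [div_le_one (by positivity)]
    nlinarith [sq_nonneg (β - 1)]

theorem stmt1 (a b β L : ℝ) (hβ : 1 < β) (hL : 0 < L) :
    (a - b) * (a * (min |a| L) ^ (2 * (β - 1)) - b * (min |b| L) ^ (2 * (β - 1))) ≥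
      ((2 * β - 1) / β ^ 2) *
        (a * (min |a| L) ^ (β - 1) - b * (min |b| L) ^ (β - 1)) ^ 2 :=
  mul_sq_sub_le_of_hasDerivAt (div_nonneg (by linarith) (sq_nonneg β)) (toFinite {-L, 0, L})
    (continuous_truncRPow L (by linarith)) (continuous_truncRPow L (by linarith))
    (fun _ ht => exists_hasDerivAt_truncRPow_sq_le hβ hL ht) a b
end

section
/- Let f : ℝ → ℝ be continuous with f(0) = 0, and suppose that for every ε > 0 there exists C_ε > 0 such that |f(s)| ≤ ε|s| + C_ε(e^{π s²} − 1) for all s ∈ ℝ. Let (uₙ) ⊂ L²(E) (E ⊂ ℝ measurable) be a bounded sequence in L²(E) such that the functions hₙ = e^{π uₙ²} − 1 are uniformly bounded in L^t(E) for some t > 1, and uₙ → 0 in L^{t'}(E) where 1/t + 1/t' = 1. Then ∫_E f(uₙ)·uₙ dx → 0 as n → ∞. -/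
/-! Multiplying the growth bound by `|s|` gives
`|f(s) s| ≤ ε s² + C_ε (e^{π s²} - 1) |s|`. Integrated along `uₙ`, the first term is at most
`ε sup ‖uₙ‖₂²` and, by Hölder, the second at most `C_ε ‖hₙ‖_t ‖uₙ‖_{t'} → 0`; as `ε` is
arbitrary, `∫_E |f(uₙ) uₙ| → 0`. -/

open MeasureTheory Filter ENNReal
open scoped NNReal Topology

theorem lintegral_enorm_mul_le_of_norm_le {α : Type*} [MeasurableSpace α] {μ : Measure α}
    {p q : ℝ≥0∞} [p.HolderConjugate q] {F g H : α → ℝ} (hg : AEStronglyMeasurable g μ)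
    (hH : AEStronglyMeasurable H μ) {ε C : ℝ≥0} (hF : ∀ x, ‖F x‖ ≤ ε * ‖g x‖ + C * ‖H x‖) :
    ∫⁻ x, ‖F x * g x‖ₑ ∂μ ≤ ε * eLpNorm g 2 μ ^ 2 + C * (eLpNorm H p μ * eLpNorm g q μ) := by
  have hpt : ∀ x, ‖F x * g x‖ₑ ≤ ε * ‖g x‖ₑ ^ 2 + C * ‖H x * g x‖ₑ := by
    intro x
    simp only [enorm_eq_nnnorm, nnnorm_mul]
    have hFx : ‖F x‖₊ ≤ ε * ‖g x‖₊ + C * ‖H x‖₊ := by exact_mod_cast hF x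
    norm_cast
    calc ‖F x‖₊ * ‖g x‖₊ ≤ (ε * ‖g x‖₊ + C * ‖H x‖₊) * ‖g x‖₊ := by gcongr
      _ = _ := by ring
  have hsq : ∫⁻ x, ‖g x‖ₑ ^ 2 ∂μ = eLpNorm g 2 μ ^ 2 := by
    simpa using (eLpNorm_nnreal_pow_eq_lintegral (f := g) (μ := μ) (p := 2) two_ne_zero).symm
  calc ∫⁻ x, ‖F x * g x‖ₑ ∂μ ≤ ∫⁻ x, (ε * ‖g x‖ₑ ^ 2 + C * ‖H x * g x‖ₑ) ∂μ := lintegral_mono hpt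
    _ = ε * ∫⁻ x, ‖g x‖ₑ ^ 2 ∂μ + C * ∫⁻ x, ‖H x * g x‖ₑ ∂μ := by
      rw [lintegral_add_left' ((hg.enorm.pow_const 2).const_mul _),
        lintegral_const_mul' _ _ coe_ne_top, lintegral_const_mul' _ _ coe_ne_top]
    _ = ε * eLpNorm g 2 μ ^ 2 + C * eLpNorm (H • g) 1 μ := by
      rw [hsq, eLpNorm_one_eq_lintegral_enorm]; rfl
    _ ≤ ε * eLpNorm g 2 μ ^ 2 + C * (eLpNorm H p μ * eLpNorm g q μ) := by
      gcongr; exact eLpNorm_smul_le_mul_eLpNorm hg hH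

theorem ENNReal.tendsto_nhds_zero_of_le_mul_add {ι : Type*} {l : Filter ι} {a b : ι → ℝ≥0∞}
    {K : ℝ≥0∞} (hK : K ≠ ∞) (hb : Tendsto b l (𝓝 0))
    (h : ∀ ε : ℝ≥0, 0 < ε → ∃ C : ℝ≥0, ∀ i, a i ≤ ε * K + C * b i) :
    Tendsto a l (𝓝 0) := by
  refine ENNReal.tendsto_nhds_zero.2 fun δ hδ => ?_
  have hδ2 : δ / 2 ≠ 0 := by simpa using hδ.ne'
  obtain ⟨c, hc, hcK⟩ := ENNReal.exists_pos_mul_lt hK hδ2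
  obtain ⟨ε, hε, hεc⟩ := ENNReal.lt_iff_exists_nnreal_btwn.1 hc
  obtain ⟨C, haC⟩ := h ε (by exact_mod_cast hε)
  have hCb : Tendsto (fun i => (C : ℝ≥0∞) * b i) l (𝓝 0) := by
    simpa using ENNReal.Tendsto.const_mul hb (Or.inr coe_ne_top)
  filter_upwards [hCb.eventually_le_const (pos_iff_ne_zero.2 hδ2)] with i hi
  calc a i ≤ ε * K + C * b i := haC i
    _ ≤ δ / 2 + δ / 2 := add_le_add ((mul_le_mul_left hεc.le K).trans hcK.le) hi
    _ = δ := ENNReal.add_halves δ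

theorem tendsto_integral_of_tendsto_lintegral_enorm {α ι G : Type*} [MeasurableSpace α]
    [NormedAddCommGroup G] [NormedSpace ℝ G] {μ : Measure α} {l : Filter ι} {F : ι → α → G}
    (h : Tendsto (fun i => ∫⁻ x, ‖F i x‖ₑ ∂μ) l (𝓝 0)) :
    Tendsto (fun i => ∫ x, F i x ∂μ) l (𝓝 0) :=
  tendsto_zero_iff_enorm_tendsto_zero.2 <| tendsto_of_tendsto_of_tendsto_of_le_of_le
    tendsto_const_nhds h (fun _ => zero_le) fun _ => enorm_integral_le_lintegral_enorm _

theorem stmt17_general (E : Set ℝ)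
    (f : ℝ → ℝ)
    (hgrowth : ∀ ε : ℝ, 0 < ε → ∃ Cε : ℝ, 0 < Cε ∧
      ∀ s : ℝ, |f s| ≤ ε * |s| + Cε * (Real.exp (Real.pi * s ^ 2) - 1))
    (u : ℕ → ℝ → ℝ)
    (hmeas : ∀ n, AEStronglyMeasurable (u n) (volume.restrict E))
    (M : ℝ≥0∞) (hM : M ≠ ⊤)
    (hL2 : ∀ n, eLpNorm (u n) 2 (volume.restrict E) ≤ M)
    (t t' : ℝ) (ht : 1 < t) (hconj : 1 / t + 1 / t' = 1)
    (B : ℝ≥0∞) (hB : B ≠ ⊤)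
    (hexp : ∀ n, eLpNorm (fun x => Real.exp (Real.pi * (u n x) ^ 2) - 1)
        (ENNReal.ofReal t) (volume.restrict E) ≤ B)
    (hconv : Tendsto (fun n => eLpNorm (u n) (ENNReal.ofReal t') (volume.restrict E))
        atTop (nhds 0)) :
    Tendsto (fun n => ∫ x in E, f (u n x) * u n x) atTop (nhds 0) := by
  have : (ENNReal.ofReal t).HolderConjugate (ENNReal.ofReal t') :=
    (Real.holderConjugate_iff.2 ⟨ht, by simpa only [one_div] using hconj⟩).ennrealOfReal
  have hBconv : Tendsto (fun n => B * eLpNorm (u n) (ENNReal.ofReal t') (volume.restrict E))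
      atTop (𝓝 0) := by
    simpa using ENNReal.Tendsto.const_mul hconv (Or.inr hB)
  refine tendsto_integral_of_tendsto_lintegral_enorm <|
    ENNReal.tendsto_nhds_zero_of_le_mul_add (pow_ne_top (n := 2) hM) hBconv fun ε hε => ?_
  obtain ⟨C, hC, hfC⟩ := hgrowth ε (NNReal.coe_pos.2 hε)
  have hexp_nonneg (s : ℝ) : 0 ≤ Real.exp (Real.pi * s ^ 2) - 1 := by
    simpa using Real.one_le_exp (by positivity : 0 ≤ Real.pi * s ^ 2)
  refine ⟨C.toNNReal, fun n => ?_⟩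
  calc _ ≤ ε * eLpNorm (u n) 2 (volume.restrict E) ^ 2 + C.toNNReal *
        (eLpNorm (fun x => Real.exp (Real.pi * (u n x) ^ 2) - 1) (ENNReal.ofReal t)
          (volume.restrict E) * eLpNorm (u n) (ENNReal.ofReal t') (volume.restrict E)) := by
        refine lintegral_enorm_mul_le_of_norm_le (hmeas n)
          ((by fun_prop : Continuous fun s => Real.exp (Real.pi * s ^ 2) - 1)
            |>.comp_aestronglyMeasurable (hmeas n)) fun x => ?_
        simpa only [Real.norm_eq_abs, abs_of_nonneg (hexp_nonneg _), Real.coe_toNNReal _ hC.le]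
          using hfC (u n x)
    _ ≤ _ := by gcongr; exacts [hL2 n, hexp n]

theorem stmt17 (E : Set ℝ) (hE : MeasurableSet E)
    (f : ℝ → ℝ) (hf : Continuous f) (hf0 : f 0 = 0)
    (hgrowth : ∀ ε : ℝ, 0 < ε → ∃ Cε : ℝ, 0 < Cε ∧
      ∀ s : ℝ, |f s| ≤ ε * |s| + Cε * (Real.exp (Real.pi * s ^ 2) - 1))
    (u : ℕ → ℝ → ℝ)
    (hmeas : ∀ n, AEStronglyMeasurable (u n) (volume.restrict E))
    (M : ℝ≥0∞) (hM : M ≠ ⊤)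
    (hL2 : ∀ n, eLpNorm (u n) 2 (volume.restrict E) ≤ M)
    (t t' : ℝ) (ht : 1 < t) (hconj : 1 / t + 1 / t' = 1)
    (B : ℝ≥0∞) (hB : B ≠ ⊤)
    (hexp : ∀ n, eLpNorm (fun x => Real.exp (Real.pi * (u n x) ^ 2) - 1)
        (ENNReal.ofReal t) (volume.restrict E) ≤ B)
    (hconv : Tendsto (fun n => eLpNorm (u n) (ENNReal.ofReal t') (volume.restrict E))
        atTop (nhds 0)) :
    Tendsto (fun n => ∫ x in E, f (u n x) * u n x) atTop (nhds 0) :=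
  stmt17_general E f hgrowth u hmeas M hM hL2 t t' ht hconj B hB hexp hconv
end
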